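/- arXiv:2511.22778 — 2 statements merged into one kernel-verified Lean document; each statement's English description precedes it below -/
import Mathlib

section
/- Let K be a field, let I be a proper interval of ℤ², and let P be a nonempty simple polyomino with P ⊆ P_I such that no cell of P shares a vertex with the boundary of I, and set P^c := P_I \ P. Then there exist no finite simple graph G and no bijection ε from V(P^c) to the edge set E(G) such that, under the identification of the variable x_v of S_{P^c} with the variable t_{ε(v)}, the ideal I_{P^c} equals the toric ideal of the edge ring of G. -/
/-!
Write `Q = P_I \ P`. Since `P` stays away from the boundary of `I`, the cells of `I` along its
boundary lie in `Q`. Hence every rectangle spanned by the lines `x = a₁, a₁ + 1, b₁ - 1, b₁` and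
`y = a₂, a₂ + 1, b₂ - 1, b₂` that avoids the central square `[a₁ + 1, b₁ - 1] × [a₂ + 1, b₂ - 1]`
is an inner interval of `Q`, while the central square contains a cell of `P`.

If `I_Q` were the toric ideal of the edge ring of a graph, every inner 2-minor
`x_a x_b - x_c x_d` would say that `ε a, ε b` and `ε c, ε d` have the same endpoints counted with
multiplicity, i.e. that the four edges form a 4-cycle. Comparing these 4-cycles shows that the
edges along each middle column of the frame share an endpoint; the 4-cycles of the middle cells
of the bottom and top rows then force the 2-minor of the central square into the toric ideal.
But its monomial `x_a x_b` occurs in no inner 2-minor of `Q`, so this minor is not in `I_Q`.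
-/

open MvPolynomial

namespace PolyoStmt

/-- A cell of `ℤ²`, identified with its lower-left corner. -/
abbrev Cell : Type := ℤ × ℤ

/-- The four vertices of a cell. -/
def cellVertices (c : Cell) : Set (ℤ × ℤ) :=
  {c, (c.1 + 1, c.2), (c.1, c.2 + 1), (c.1 + 1, c.2 + 1)}

/-- The vertex set of a collection of cells. -/
def vertexSet (P : Finset Cell) : Set (ℤ × ℤ) := ⋃ c ∈ P, cellVertices c

/-- Two cells share a common edge. -/
def SharesEdge (a b : Cell) : Prop :=
  (a.1 = b.1 ∧ (b.2 = a.2 + 1 ∨ a.2 = b.2 + 1)) ∨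
  (a.2 = b.2 ∧ (b.1 = a.1 + 1 ∨ a.1 = b.1 + 1))

/-- Two cells share at least one vertex (equivalently, the closed unit squares meet). -/
def SharesVertex (a b : Cell) : Prop := (cellVertices a ∩ cellVertices b).Nonempty

/-- Any two members of `S` are joined by a path inside `S` whose consecutive
members are related by `r`. -/
def ConnectedVia (S : Set Cell) (r : Cell → Cell → Prop) : Prop :=
  ∀ a ∈ S, ∀ b ∈ S,
    Relation.ReflTransGen (fun x y => x ∈ S ∧ y ∈ S ∧ r x y) a b

/-- A polyomino: a nonempty, edge-connected finite collection of cells. -/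
def IsPolyomino (P : Finset Cell) : Prop :=
  P.Nonempty ∧ ConnectedVia (↑P) SharesEdge

/-- A collection of cells is simple if its complement is edge-connected (no holes). -/
def IsSimple (P : Finset Cell) : Prop :=
  ConnectedVia ((↑P : Set Cell)ᶜ) SharesEdge

/-- A collection of cells is weakly connected if it is connected through shared vertices. -/
def IsWeaklyConnected (P : Finset Cell) : Prop :=
  ConnectedVia (↑P) SharesVertex

def IsRowConvex (P : Finset Cell) : Prop :=
  ∀ c ∈ P, ∀ d ∈ P, c.2 = d.2 → ∀ x : ℤ, c.1 ≤ x → x ≤ d.1 → (x, c.2) ∈ P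

def IsColumnConvex (P : Finset Cell) : Prop :=
  ∀ c ∈ P, ∀ d ∈ P, c.1 = d.1 → ∀ y : ℤ, c.2 ≤ y → y ≤ d.2 → (c.1, y) ∈ P

def IsConvex (P : Finset Cell) : Prop := IsRowConvex P ∧ IsColumnConvex P

/-- `P` is thin: it contains no square tetromino. -/
def IsThin (P : Finset Cell) : Prop :=
  ¬ ∃ c : Cell, c ∈ P ∧ (c.1 + 1, c.2) ∈ P ∧ (c.1, c.2 + 1) ∈ P ∧ (c.1 + 1, c.2 + 1) ∈ P

/-- The cell with lower-left corner `c` is contained in the interval `[a, b]`. -/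
def CellInBox (a b c : Cell) : Prop := a ≤ c ∧ c.1 + 1 ≤ b.1 ∧ c.2 + 1 ≤ b.2

/-- `[a, b]` is an inner interval of `P`: it is proper and all cells inside it belong to `P`. -/
def IsInnerInterval (P : Finset Cell) (a b : Cell) : Prop :=
  a.1 < b.1 ∧ a.2 < b.2 ∧ ∀ c : Cell, CellInBox a b c → c ∈ P

/-- The cells of the rectangle determined by the interval `[a, b]`. -/
noncomputable def rectCells (a b : Cell) : Finset Cell :=
  (Finset.Icc a b).filter fun c => c.1 + 1 ≤ b.1 ∧ c.2 + 1 ≤ b.2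

/-- The type indexing the variables of `S_P`: the vertices of `P`. -/
abbrev Vtx (P : Finset Cell) : Type := {v : ℤ × ℤ // v ∈ vertexSet P}

/-- The polynomial ring `S_P = K[x_v : v ∈ V(P)]`. -/
abbrev polyRing (K : Type) [Field K] (P : Finset Cell) : Type :=
  MvPolynomial (Vtx P) K

/-- The polyomino ideal (ideal of inner 2-minors) of `P`. -/
noncomputable def polyoIdeal (K : Type) [Field K] (P : Finset Cell) :
    Ideal (polyRing K P) :=
  Ideal.span { f | ∃ (a b : ℤ × ℤ) (ha : a ∈ vertexSet P) (hb : b ∈ vertexSet P)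
      (hc : ((a.1, b.2) : ℤ × ℤ) ∈ vertexSet P)
      (hd : ((b.1, a.2) : ℤ × ℤ) ∈ vertexSet P),
      IsInnerInterval P a b ∧
      f = X ⟨a, ha⟩ * X ⟨b, hb⟩ - X ⟨(a.1, b.2), hc⟩ * X ⟨(b.1, a.2), hd⟩ }

/-- The coordinate ring `K[P] = S_P / I_P`. -/
abbrev coordRing (K : Type) [Field K] (P : Finset Cell) : Type :=
  polyRing K P ⧸ polyoIdeal K P

/-- The degree-`k` graded component of `K[P]` (the image of the homogeneous
polynomials of degree `k`). -/
noncomputable def gradedPiece (K : Type) [Field K] (P : Finset Cell) (k : ℕ) :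
    Submodule K (coordRing K P) :=
  (MvPolynomial.homogeneousSubmodule (Vtx P) K k).map
    (Ideal.Quotient.mkₐ K (polyoIdeal K P)).toLinearMap

/-- The Hilbert–Poincaré series of `K[P]`, as a formal power series over `ℤ`. -/
noncomputable def hilbertSeries (K : Type) [Field K] (P : Finset Cell) : PowerSeries ℤ :=
  PowerSeries.mk fun k => (Module.finrank K (gradedPiece K P k) : ℤ)

/-- Cells `A` and `B` of `P` are attacking. -/
def Attacking (P : Finset Cell) (A B : Cell) : Prop :=
  A ≠ B ∧
  ((A.2 = B.2 ∧ ∀ x : ℤ, min A.1 B.1 ≤ x → x ≤ max A.1 B.1 → (x, A.2) ∈ P) ∨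
   (A.1 = B.1 ∧ ∀ y : ℤ, min A.2 B.2 ≤ y → y ≤ max A.2 B.2 → (A.1, y) ∈ P))

/-- The set of `k`-rook configurations of `P`. -/
def RookConfigs (P : Finset Cell) (k : ℕ) : Set (Finset Cell) :=
  {F | ↑F ⊆ (↑P : Set Cell) ∧ F.card = k ∧
    (↑F : Set Cell).Pairwise fun A B => ¬ Attacking P A B}

/-- The number of `k`-rook configurations of `P`. -/
noncomputable def rookNum (P : Finset Cell) (k : ℕ) : ℕ := Set.ncard (RookConfigs P k)

/-- The rook polynomial of `P`, regarded as a formal power series over `ℤ`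
(all coefficients beyond the rook number vanish). -/
noncomputable def rookSeries (P : Finset Cell) : PowerSeries ℤ :=
  PowerSeries.mk fun k => (rookNum P k : ℤ)

/-- One switch move between rook configurations of `P`. -/
def SwitchStep (P : Finset Cell) (F F' : Finset Cell) : Prop :=
  ∃ a b : Cell, IsInnerInterval P a b ∧
    ((a ∈ F ∧ (b.1 - 1, b.2 - 1) ∈ F ∧
        F' = (F \ {a, (b.1 - 1, b.2 - 1)}) ∪ {(a.1, b.2 - 1), (b.1 - 1, a.2)}) ∨
     ((a.1, b.2 - 1) ∈ F ∧ (b.1 - 1, a.2) ∈ F ∧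
        F' = (F \ {(a.1, b.2 - 1), (b.1 - 1, a.2)}) ∪ {a, (b.1 - 1, b.2 - 1)}))

/-- Equivalence of `k`-rook configurations up to switches. -/
def switchSetoid (P : Finset Cell) (k : ℕ) : Setoid (RookConfigs P k) :=
  ⟨fun F F' => Relation.EqvGen (SwitchStep P) F.1 F'.1,
   fun _ => Relation.EqvGen.refl _,
   fun h => Relation.EqvGen.symm _ _ h,
   fun h h' => Relation.EqvGen.trans _ _ _ h h'⟩

/-- The number of equivalence classes of `k`-rook configurations up to switches. -/
noncomputable def switchRookNum (P : Finset Cell) (k : ℕ) : ℕ :=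
  Nat.card (Quotient (switchSetoid P k))

/-- The switching rook polynomial of `P`, regarded as a formal power series over `ℤ`. -/
noncomputable def switchRookSeries (P : Finset Cell) : PowerSeries ℤ :=
  PowerSeries.mk fun k => (switchRookNum P k : ℤ)

/-- The unit horizontal segment from `(x, y)` to `(x + 1, y)` is an edge of a cell of `P`. -/
def HorizEdge (P : Finset Cell) (x y : ℤ) : Prop := (x, y) ∈ P ∨ (x, y - 1) ∈ P

/-- The unit vertical segment from `(x, y)` to `(x, y + 1)` is an edge of a cell of `P`. -/
def VertEdge (P : Finset Cell) (x y : ℤ) : Prop := (x, y) ∈ P ∨ (x - 1, y) ∈ P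

/-- `p` and `q` lie on a common horizontal or vertical edge interval of `P`. -/
def OnCommonEdgeInterval (P : Finset Cell) (p q : ℤ × ℤ) : Prop :=
  (p.2 = q.2 ∧ ∀ x : ℤ, min p.1 q.1 ≤ x → x < max p.1 q.1 → HorizEdge P x p.2) ∨
  (p.1 = q.1 ∧ ∀ y : ℤ, min p.2 q.2 ≤ y → y < max p.2 q.2 → VertEdge P p.1 y)

/-- A zig-zag walk of `P`, consisting of `n + 2` distinct inner intervals
`I_i = [lo i, hi i]` with distinguished corners `v i`, `z i`, `u i`. -/
structure ZigZagWalk (P : Finset Cell) where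
  n : ℕ
  lo : ZMod (n + 2) → ℤ × ℤ
  hi : ZMod (n + 2) → ℤ × ℤ
  v : ZMod (n + 2) → ℤ × ℤ
  z : ZMod (n + 2) → ℤ × ℤ
  u : ZMod (n + 2) → ℤ × ℤ
  inner : ∀ i, IsInnerInterval P (lo i) (hi i)
  distinct : ∀ i j, lo i = lo j → hi i = hi j → i = j
  corners : ∀ i,
    (({v i, z i} : Set (ℤ × ℤ)) = {lo i, hi i} ∧
      ({u i, v (i + 1)} : Set (ℤ × ℤ)) = {((lo i).1, (hi i).2), ((hi i).1, (lo i).2)}) ∨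
    (({v i, z i} : Set (ℤ × ℤ)) = {((lo i).1, (hi i).2), ((hi i).1, (lo i).2)} ∧
      ({u i, v (i + 1)} : Set (ℤ × ℤ)) = {lo i, hi i})
  inter : ∀ i,
    Set.Icc (lo i) (hi i) ∩ Set.Icc (lo (i + 1)) (hi (i + 1)) = {v (i + 1)}
  edgeInt : ∀ i, OnCommonEdgeInterval P (v i) (v (i + 1))
  noCommon : ∀ i j, i ≠ j → ∀ a b : ℤ × ℤ, IsInnerInterval P a b →
    ¬ (z i ∈ Set.Icc a b ∧ z j ∈ Set.Icc a b)
  hv : ∀ i, v i ∈ vertexSet P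
  hz : ∀ i, z i ∈ vertexSet P
  hu : ∀ i, u i ∈ vertexSet P

/-- `P` admits a zig-zag walk. -/
def HasZigZagWalk (P : Finset Cell) : Prop := Nonempty (ZigZagWalk P)

/-- The binomial `f_W` attached to a zig-zag walk `W`. -/
noncomputable def zigZagBinomial (K : Type) [Field K] {P : Finset Cell}
    (W : ZigZagWalk P) : polyRing K P :=
  (∏ i : ZMod (W.n + 2), X ⟨W.z i, W.hz i⟩) - ∏ i : ZMod (W.n + 2), X ⟨W.u i, W.hu i⟩

/-- A closed path polyomino. -/
def IsClosedPath (P : Finset Cell) : Prop :=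
  IsPolyomino P ∧
  ∃ (n : ℕ) (A : ZMod (n + 6) → Cell),
    Function.Injective A ∧
    (∀ i, A i ∈ P) ∧ (∀ c ∈ P, ∃ i, A i = c) ∧
    (∀ i, SharesEdge (A i) (A (i + 1))) ∧
    (∀ i j : ZMod (n + 6),
      j ∉ ({i - 2, i - 1, i, i + 1, i + 2} : Set (ZMod (n + 6))) →
      ¬ SharesVertex (A i) (A j))

/-- A grid polyomino. -/
def IsGridPolyomino (P : Finset Cell) : Prop :=
  IsPolyomino P ∧
  ∃ (m n : ℤ) (r s : ℕ) (hr : 0 < r) (hs : 0 < s)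
    (x x' : Fin r → ℤ) (y y' : Fin s → ℤ),
    (∀ i, x i < x' i) ∧ (∀ j, y j < y' j) ∧
    1 < x ⟨0, hr⟩ ∧ x' ⟨r - 1, Nat.sub_lt hr one_pos⟩ < m ∧
    1 < y ⟨0, hs⟩ ∧ y' ⟨s - 1, Nat.sub_lt hs one_pos⟩ < n ∧
    (∀ i : Fin r, ∀ h : i.1 + 1 < r, x ⟨i.1 + 1, h⟩ = x' i + 1) ∧
    (∀ j : Fin s, ∀ h : j.1 + 1 < s, y ⟨j.1 + 1, h⟩ = y' j + 1) ∧
    P = rectCells (1, 1) (m, n) \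
      Finset.univ.biUnion (fun i : Fin r =>
        Finset.univ.biUnion fun j : Fin s => rectCells (x i, y j) (x' i, y' j))

/-- A maximal horizontal edge interval of `P`. -/
structure MaxHorizInterval (P : Finset Cell) where
  row : ℤ
  left : ℤ
  right : ℤ
  le : left ≤ right
  edges : ∀ x : ℤ, left ≤ x → x < right → HorizEdge P x row
  notLeft : ¬ HorizEdge P (left - 1) row
  notRight : ¬ HorizEdge P right row

/-- Membership of a lattice point in a maximal horizontal edge interval. -/
def MaxHorizInterval.mem {P : Finset Cell} (H : MaxHorizInterval P) (p : ℤ × ℤ) : Prop :=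
  p.2 = H.row ∧ H.left ≤ p.1 ∧ p.1 ≤ H.right

/-- A maximal vertical edge interval of `P`. -/
structure MaxVertInterval (P : Finset Cell) where
  col : ℤ
  bot : ℤ
  top : ℤ
  le : bot ≤ top
  edges : ∀ y : ℤ, bot ≤ y → y < top → VertEdge P col y
  notBot : ¬ VertEdge P col (bot - 1)
  notTop : ¬ VertEdge P col top

/-- Membership of a lattice point in a maximal vertical edge interval. -/
def MaxVertInterval.mem {P : Finset Cell} (V : MaxVertInterval P) (p : ℤ × ℤ) : Prop :=
  p.1 = V.col ∧ V.bot ≤ p.2 ∧ p.2 ≤ V.top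

/-- The homomorphism `Φ_P : S_P → K[v₁, …, v_m, h₁, …, h_n]` sending `x_a` to
`v_i h_j`, where `V_i` (given by `Vmap`) and `H_j` (given by `Hmap`) are the maximal
vertical and horizontal edge intervals through `a`. -/
noncomputable def PhiMap (K : Type) [Field K] (P : Finset Cell)
    (Vmap : Vtx P → MaxVertInterval P) (Hmap : Vtx P → MaxHorizInterval P) :
    polyRing K P →ₐ[K] MvPolynomial (MaxVertInterval P ⊕ MaxHorizInterval P) K :=
  aeval fun a => X (Sum.inl (Vmap a)) * X (Sum.inr (Hmap a))

/-- The monomial `y_u y_w` attached to an edge `{u, w}` of a graph. -/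
noncomputable def edgeMonomial (K : Type) [Field K] {VG : Type} (e : Sym2 VG) :
    MvPolynomial VG K :=
  Sym2.lift ⟨fun u w => X u * X w, fun u w => mul_comm _ _⟩ e

/-- A parallelogram polyomino. -/
def IsParallelogram (P : Finset Cell) : Prop :=
  IsPolyomino P ∧ IsConvex P ∧
  ∃ a b : Cell, (∀ c ∈ P, a ≤ c ∧ c ≤ b) ∧ a ∈ P ∧ b ∈ P

/-- A frame polyomino: the complement of a parallelogram polyomino inside a rectangle,
the parallelogram sharing no vertex with the boundary of the rectangle. -/
def IsFrame (P : Finset Cell) : Prop :=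
  IsPolyomino P ∧
  ∃ (a b : Cell) (Q : Finset Cell), a.1 < b.1 ∧ a.2 < b.2 ∧
    IsParallelogram Q ∧ Q ⊆ rectCells a b ∧
    (∀ c ∈ Q, a.1 < c.1 ∧ c.1 + 1 < b.1 ∧ a.2 < c.2 ∧ c.2 + 1 < b.2) ∧
    P = rectCells a b \ Q

end PolyoStmt

namespace Multiset

theorem mem_pair_of_toFinsupp_le {α : Type*} [DecidableEq α] {u v a b : α}
    (h : toFinsupp {u, v} ≤ toFinsupp {a, b}) : (u = a ∨ u = b) ∧ (v = a ∨ v = b) := by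
  have h' : ({u, v} : Multiset α) ≤ {a, b} := Finsupp.orderIsoMultiset.symm.le_iff_le.1 h
  simpa using And.intro (mem_of_le h' (by simp : u ∈ ({u, v} : Multiset α)))
    (mem_of_le h' (by simp : v ∈ ({u, v} : Multiset α)))

end Multiset

namespace Sym2

variable {V : Type*}

@[simp]
theorem toMultiset_mk (x y : V) : s(x, y).toMultiset = {x, y} := rfl

theorem exists_cycle_of_toMultiset_add_eq {A B A' B' : Sym2 V} (hA : ¬ A.IsDiag)
    (hAB : A ≠ B) (hAA' : A ≠ A')
    (h : A.toMultiset + B'.toMultiset = A'.toMultiset + B.toMultiset) :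
    ∃ x y z w, A = s(x, y) ∧ B = s(x, z) ∧ A' = s(y, w) ∧ B' = s(z, w) := by
  have hmem : ∀ v ∈ A, v ∈ A' ∨ v ∈ B := fun v hv => by
    have : v ∈ A.toMultiset + B'.toMultiset := Multiset.mem_add.2 (.inl (mem_toMultiset.2 hv))
    simpa [h] using this
  obtain ⟨x, hxA, hxB⟩ : ∃ x ∈ A, x ∈ B := by
    by_contra! hno
    induction A using Sym2.ind with
    | h u v =>
      have hu := (hmem u (mem_mk_left u v)).resolve_right (hno u (mem_mk_left u v))
      have hv := (hmem v (mem_mk_right u v)).resolve_right (hno v (mem_mk_right u v))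
      exact hAA' (eq_of_ne_mem (by simpa using hA) (mem_mk_left u v) (mem_mk_right u v) hu hv)
  obtain ⟨y, rfl⟩ := mem_iff_exists.1 hxA
  obtain ⟨z, rfl⟩ := mem_iff_exists.1 hxB
  have hyz : y ≠ z := fun h => hAB (congr_right.2 h)
  have hcons : y ::ₘ B'.toMultiset = z ::ₘ A'.toMultiset := by
    simpa [Multiset.insert_eq_cons, Multiset.cons_add, Multiset.add_cons, add_comm] using h
  have hy : y ∈ A' := by
    have : y ∈ z ::ₘ A'.toMultiset := hcons ▸ Multiset.mem_cons_self y _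
    simpa [hyz] using this
  have hz : z ∈ B' := by
    have : z ∈ y ::ₘ B'.toMultiset := hcons ▸ Multiset.mem_cons_self z _
    simpa [hyz.symm] using this
  obtain ⟨w, rfl⟩ := mem_iff_exists.1 hy
  obtain ⟨w', rfl⟩ := mem_iff_exists.1 hz
  obtain rfl : w' = w := by simpa [Multiset.insert_eq_cons, Multiset.cons_swap y z] using hcons
  exact ⟨x, y, z, w', rfl, rfl, rfl, rfl⟩

theorem exists_cycle_of_toMultiset_add_eq_of_mem {A B A' B' : Sym2 V} {c d : V}
    (hA : ¬ A.IsDiag) (hAB : A ≠ B) (hAA' : A ≠ A') (hBB' : B ≠ B')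
    (h : A.toMultiset + B'.toMultiset = A'.toMultiset + B.toMultiset)
    (hcA : c ∈ A) (hcA' : c ∈ A') (hdB : d ∈ B) (hdB' : d ∈ B') :
    ∃ x w, A = s(x, c) ∧ B = s(x, d) ∧ A' = s(c, w) ∧ B' = s(d, w) := by
  obtain ⟨x, y, z, w, rfl, rfl, rfl, rfl⟩ := exists_cycle_of_toMultiset_add_eq hA hAB hAA' h
  obtain rfl : y = c := by
    by_contra hne
    exact hAA' (eq_of_ne_mem hne (mem_mk_right _ _) hcA (mem_mk_left _ _) hcA')
  obtain rfl : z = d := by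
    by_contra hne
    exact hBB' (eq_of_ne_mem hne (mem_mk_right _ _) hdB (mem_mk_left _ _) hdB')
  exact ⟨x, w, rfl, rfl, rfl, rfl⟩

theorem exists_forall_mem_of_toMultiset_add_eq {κ : Type*} {f g : κ → Sym2 V} {y₀ y₁ : κ}
    (hy : y₁ ≠ y₀) (hf : Function.Injective f) (hdiag : ¬ (f y₀).IsDiag) (hfg : f y₀ ≠ g y₀)
    (h : ∀ y, y ≠ y₀ →
      (f y₀).toMultiset + (g y).toMultiset = (f y).toMultiset + (g y₀).toMultiset) :
    ∃ c, ∀ y, c ∈ f y := by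
  obtain ⟨x, c, _, _, hx, hxg, -⟩ :=
    exists_cycle_of_toMultiset_add_eq hdiag hfg (hf.ne hy.symm) (h y₁ hy)
  refine ⟨c, fun y => ?_⟩
  rcases eq_or_ne y y₀ with rfl | hy
  · simp [hx]
  obtain ⟨x', c', _, _, hx', hxg', hfy, -⟩ :=
    exists_cycle_of_toMultiset_add_eq hdiag hfg (hf.ne hy.symm) (h y hy)
  -- the distinct edges `f y₀` and `g y₀` have at most one common endpoint
  obtain rfl : x' = x := by
    by_contra hne
    exact hfg (eq_of_ne_mem hne (hx' ▸ mem_mk_left _ _) (hx ▸ mem_mk_left _ _)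
      (hxg' ▸ mem_mk_left _ _) (hxg ▸ mem_mk_left _ _))
  obtain rfl : c' = c := congr_right.1 (hx'.symm.trans hx)
  simp [hfy]

end Sym2

namespace MvPolynomial

variable {σ R : Type*} [CommSemiring R]

theorem coeff_eq_zero_of_mem_span {S : Set (MvPolynomial σ R)} {μ : σ →₀ ℕ}
    (hS : ∀ s ∈ S, ∀ r, coeff μ (r * s) = 0) {g : MvPolynomial σ R} (hg : g ∈ Ideal.span S) :
    coeff μ g = 0 := by
  suffices ∀ r, coeff μ (r * g) = 0 by simpa using this 1
  induction hg using Submodule.span_induction with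
  | mem s hs => exact hS s hs
  | zero => simp
  | add x y _ _ hx hy => intro r; simp [mul_add, hx, hy]
  | smul c x _ hx => intro r; rw [smul_eq_mul, ← mul_assoc]; exact hx _

theorem X_mul_X_eq_monomial [DecidableEq σ] (u v : σ) :
    (X u * X v : MvPolynomial σ R) = monomial (Multiset.toFinsupp {u, v}) 1 := by
  rw [X, X, monomial_mul, one_mul, Multiset.insert_eq_cons, ← Multiset.singleton_add,
    Multiset.toFinsupp_add, Multiset.toFinsupp_singleton, Multiset.toFinsupp_singleton]

end MvPolynomial

namespace PolyoStmt

/-- The 2-minor of the rectangle `[i, i'] × [j, j']` lies in the toric ideal of the edge map `e`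
(see `aeval_edgeMonomial_binomial_eq_zero_iff`). -/
def RectRel {V ι κ : Type*} (e : ι → κ → Sym2 V) (i i' : ι) (j j' : κ) : Prop :=
  (e i j).toMultiset + (e i' j').toMultiset = (e i j').toMultiset + (e i' j).toMultiset

theorem rectRel_center_of_frame {V : Type*} {e : Fin 4 → Fin 4 → Sym2 V}
    (hdiag : ∀ i j, ¬ (e i j).IsDiag) (hinj : Function.Injective (Function.uncurry e))
    (hrel : ∀ i i' j j', i < i' → j < j' → (i' ≤ 1 ∨ 2 ≤ i ∨ j' ≤ 1 ∨ 2 ≤ j) →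
      RectRel e i i' j j') :
    RectRel e 1 2 1 2 := by
  have hne : ∀ {i j i' j'}, (i, j) ≠ (i', j') → e i j ≠ e i' j' := fun h h' => h (hinj h')
  have hcol : ∀ i, Function.Injective (e i) := fun i y y' h =>
    congrArg Prod.snd (hinj (a₁ := (i, y)) (a₂ := (i, y')) h)
  obtain ⟨c₁, hc₁⟩ := Sym2.exists_forall_mem_of_toMultiset_add_eq (f := e 1) (g := e 0)
    (y₀ := 0) (y₁ := 1) (by decide) (hcol 1) (hdiag 1 0) (hne (by decide)) fun y hy => by
      have := hrel 0 1 0 y (by decide) (Fin.pos_iff_ne_zero.2 hy) (.inl le_rfl)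
      unfold RectRel at this
      rw [add_comm, ← this, add_comm]
  obtain ⟨c₂, hc₂⟩ := Sym2.exists_forall_mem_of_toMultiset_add_eq (f := e 2) (g := e 3)
    (y₀ := 0) (y₁ := 1) (by decide) (hcol 2) (hdiag 2 0) (hne (by decide)) fun y hy =>
      hrel 2 3 0 y (by decide) (Fin.pos_iff_ne_zero.2 hy) (.inr (.inl le_rfl))
  obtain ⟨-, w, -, -, h₁₁, h₂₁⟩ := Sym2.exists_cycle_of_toMultiset_add_eq_of_mem (hdiag 1 0)
    (hne (by decide)) (hne (by decide)) (hne (by decide))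
    (hrel 1 2 0 1 (by decide) (by decide) (by decide)) (hc₁ 0) (hc₁ 1) (hc₂ 0) (hc₂ 1)
  obtain ⟨x, -, h₁₂, h₂₂, -, -⟩ := Sym2.exists_cycle_of_toMultiset_add_eq_of_mem (hdiag 1 2)
    (hne (by decide)) (hne (by decide)) (hne (by decide))
    (hrel 1 2 2 3 (by decide) (by decide) (by decide)) (hc₁ 2) (hc₁ 3) (hc₂ 2) (hc₂ 3)
  simp only [RectRel, h₁₁, h₂₁, h₁₂, h₂₂, Sym2.toMultiset_mk, Multiset.insert_eq_cons,
    ← Multiset.singleton_add]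
  abel

section polynomial

variable {K : Type} [Field K]

theorem edgeMonomial_eq_monomial {V : Type} [DecidableEq V] (e : Sym2 V) :
    edgeMonomial K e = monomial (Multiset.toFinsupp e.toMultiset) 1 := by
  induction e using Sym2.ind with
  | h u w => exact X_mul_X_eq_monomial u w

theorem aeval_edgeMonomial_binomial_eq_zero_iff {σ V : Type} (f : σ → Sym2 V) (u v w z : σ) :
    aeval (fun s => edgeMonomial K (f s)) (X u * X v - X w * X z : MvPolynomial σ K) = 0 ↔
      (f u).toMultiset + (f v).toMultiset = (f w).toMultiset + (f z).toMultiset := by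
  classical
  simp only [map_sub, map_mul, aeval_X, sub_eq_zero, edgeMonomial_eq_monomial, monomial_mul,
    one_mul, ← map_add]
  exact (monomial_left_injective one_ne_zero).eq_iff.trans Multiset.toFinsupp.injective.eq_iff

theorem binomial_not_mem_polyoIdeal {Q : Finset Cell} {a b : ℤ × ℤ} (ha : a ∈ vertexSet Q)
    (hb : b ∈ vertexSet Q) (hc : (a.1, b.2) ∈ vertexSet Q) (hd : (b.1, a.2) ∈ vertexSet Q)
    (h₁ : a.1 < b.1) (h₂ : a.2 < b.2) (hab : ¬ IsInnerInterval Q a b) :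
    X ⟨a, ha⟩ * X ⟨b, hb⟩ - X ⟨(a.1, b.2), hc⟩ * X ⟨(b.1, a.2), hd⟩ ∉ polyoIdeal K Q := by
  classical
  set μ := Multiset.toFinsupp ({⟨a, ha⟩, ⟨b, hb⟩} : Multiset (Vtx Q))
  have hμ : ∀ u v : Vtx Q, Multiset.toFinsupp {u, v} ≤ μ →
      (u.1 = a ∨ u.1 = b) ∧ (v.1 = a ∨ v.1 = b) := fun u v h => by
    simpa [Subtype.ext_iff] using Multiset.mem_pair_of_toFinsupp_le h
  intro hmem
  have hcoeff : coeff μ (X ⟨a, ha⟩ * X ⟨b, hb⟩ - X ⟨(a.1, b.2), hc⟩ * X ⟨(b.1, a.2), hd⟩ :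
      polyRing K Q) = 1 := by
    rw [X_mul_X_eq_monomial, X_mul_X_eq_monomial, coeff_sub, coeff_monomial, coeff_monomial,
      if_pos rfl, if_neg, sub_zero]
    intro h
    have := (hμ _ _ h.le).1
    simp only [Prod.ext_iff] at this
    omega
  refine one_ne_zero (hcoeff ▸ coeff_eq_zero_of_mem_span ?_ hmem)
  rintro _ ⟨A, B, hA, hB, hC, hD, hI, rfl⟩ r
  rw [X_mul_X_eq_monomial, X_mul_X_eq_monomial, mul_sub, coeff_sub, coeff_mul_monomial',
    coeff_mul_monomial', if_neg, if_neg, sub_zero]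
  · intro h
    have := hμ _ _ h
    simp only [Prod.ext_iff] at this
    have := hI.1
    have := hI.2.1
    omega
  · intro h
    obtain ⟨hA', hB'⟩ := hμ _ _ h
    dsimp only at hA' hB'
    rcases hA' with rfl | rfl <;> rcases hB' with rfl | rfl
    · exact hI.1.false
    · exact hab hI
    · exact absurd hI.1 (by omega)
    · exact hI.1.false

end polynomial

theorem mem_rectCells {a b c : Cell} :
    c ∈ rectCells a b ↔ a.1 ≤ c.1 ∧ a.2 ≤ c.2 ∧ c.1 + 1 ≤ b.1 ∧ c.2 + 1 ≤ b.2 := by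
  simp only [rectCells, Finset.mem_filter, Finset.mem_Icc, Prod.le_def]
  omega

theorem mem_vertexSet_of_mem {P : Finset Cell} {c : Cell} (hc : c ∈ P) {x y : ℤ}
    (hx : x = c.1 ∨ x = c.1 + 1) (hy : y = c.2 ∨ y = c.2 + 1) : (x, y) ∈ vertexSet P :=
  Set.mem_biUnion hc (by
    rcases hx with rfl | rfl <;> rcases hy with rfl | rfl <;> simp [cellVertices])

/-- The lines of the width-one frame inside `[u, v]`; indices `1` and `2` bound its center. -/
def frameCoord (u v : ℤ) : Fin 4 → ℤ := ![u, u + 1, v - 1, v]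

section frameCoord

variable {u v : ℤ}

theorem frameCoord_strictMono (h : u + 1 < v - 1) : StrictMono (frameCoord u v) := by
  simp [frameCoord, strictMono_vecCons]
  omega

theorem frameCoord_mem_Icc (h : u + 1 < v - 1) (i : Fin 4) :
    u ≤ frameCoord u v i ∧ frameCoord u v i ≤ v := by
  fin_cases i <;> simp [frameCoord] <;> omega

theorem frameCoord_le_of_le_one {i : Fin 4} (hi : i ≤ 1) : frameCoord u v i ≤ u + 1 := by
  fin_cases i <;> simp_all [frameCoord]

theorem le_frameCoord_of_two_le {i : Fin 4} (hi : 2 ≤ i) : v - 1 ≤ frameCoord u v i := by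
  fin_cases i <;> simp_all [frameCoord]

theorem exists_frameCoord_eq (i : Fin 4) :
    ∃ c, (c = u ∨ c = v - 1) ∧ (frameCoord u v i = c ∨ frameCoord u v i = c + 1) := by
  fin_cases i <;> simp [frameCoord]

end frameCoord

section frame

variable {a b : Cell} {P : Finset Cell}

theorem frame_mem_vertexSet
    (hinterior : ∀ c ∈ P, a.1 < c.1 ∧ c.1 + 1 < b.1 ∧ a.2 < c.2 ∧ c.2 + 1 < b.2)
    (hx : a.1 + 1 < b.1 - 1) (hy : a.2 + 1 < b.2 - 1) (i j : Fin 4) :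
    (frameCoord a.1 b.1 i, frameCoord a.2 b.2 j) ∈ vertexSet (rectCells a b \ P) := by
  obtain ⟨cx, hcx, hxi⟩ := exists_frameCoord_eq (u := a.1) (v := b.1) i
  obtain ⟨cy, hcy, hyj⟩ := exists_frameCoord_eq (u := a.2) (v := b.2) j
  refine mem_vertexSet_of_mem (c := (cx, cy)) ?_ hxi hyj
  rw [Finset.mem_sdiff, mem_rectCells]
  refine ⟨by omega, fun hc => ?_⟩
  have := hinterior _ hc
  omega

theorem frame_isInnerInterval
    (hinterior : ∀ c ∈ P, a.1 < c.1 ∧ c.1 + 1 < b.1 ∧ a.2 < c.2 ∧ c.2 + 1 < b.2)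
    (hx : a.1 + 1 < b.1 - 1) (hy : a.2 + 1 < b.2 - 1) {i i' j j' : Fin 4} (hi : i < i')
    (hj : j < j') (hcenter : i' ≤ 1 ∨ 2 ≤ i ∨ j' ≤ 1 ∨ 2 ≤ j) :
    IsInnerInterval (rectCells a b \ P) (frameCoord a.1 b.1 i, frameCoord a.2 b.2 j)
      (frameCoord a.1 b.1 i', frameCoord a.2 b.2 j') := by
  refine ⟨frameCoord_strictMono hx hi, frameCoord_strictMono hy hj, fun c hc => ?_⟩
  obtain ⟨⟨hc₁, hc₂⟩, hc₃, hc₄⟩ := hc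
  have := frameCoord_mem_Icc hx i
  have := frameCoord_mem_Icc hx i'
  have := frameCoord_mem_Icc hy j
  have := frameCoord_mem_Icc hy j'
  rw [Finset.mem_sdiff, mem_rectCells]
  refine ⟨by omega, fun hcP => ?_⟩
  have := hinterior c hcP
  rcases hcenter with h | h | h | h
  · have := frameCoord_le_of_le_one (u := a.1) (v := b.1) h; omega
  · have := le_frameCoord_of_two_le (u := a.1) (v := b.1) h; omega
  · have := frameCoord_le_of_le_one (u := a.2) (v := b.2) h; omega
  · have := le_frameCoord_of_two_le (u := a.2) (v := b.2) h; omega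

theorem frame_center_not_isInnerInterval
    (hinterior : ∀ c ∈ P, a.1 < c.1 ∧ c.1 + 1 < b.1 ∧ a.2 < c.2 ∧ c.2 + 1 < b.2)
    {c : Cell} (hc : c ∈ P) :
    ¬ IsInnerInterval (rectCells a b \ P) (frameCoord a.1 b.1 1, frameCoord a.2 b.2 1)
      (frameCoord a.1 b.1 2, frameCoord a.2 b.2 2) := fun h => by
  have := hinterior c hc
  refine (Finset.mem_sdiff.1 (h.2.2 c ⟨Prod.le_def.2 ⟨?_, ?_⟩, ?_, ?_⟩)).2 hc <;>
    simp [frameCoord] <;> omega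

end frame

theorem stmt5_general (K : Type) [Field K] (a b : Cell)
    (P : Finset Cell) (hP : IsPolyomino P)
    (hinterior : ∀ c ∈ P, a.1 < c.1 ∧ c.1 + 1 < b.1 ∧ a.2 < c.2 ∧ c.2 + 1 < b.2) :
    ¬ ∃ (VG : Type) (_ : Fintype VG) (G : SimpleGraph VG)
        (ε : Vtx (rectCells a b \ P) ≃ G.edgeSet),
        polyoIdeal K (rectCells a b \ P) =
          RingHom.ker (MvPolynomial.aeval
            (fun v : Vtx (rectCells a b \ P) =>
              edgeMonomial K ((ε v : G.edgeSet) : Sym2 VG)) :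
            polyRing K (rectCells a b \ P) →ₐ[K] MvPolynomial VG K).toRingHom := by
  rintro ⟨VG, -, G, ε, hker⟩
  obtain ⟨c, hc⟩ := hP.1
  have hx : a.1 + 1 < b.1 - 1 := by have := hinterior c hc; omega
  have hy : a.2 + 1 < b.2 - 1 := by have := hinterior c hc; omega
  have hV := frame_mem_vertexSet hinterior hx hy
  have mem_iff : ∀ g, g ∈ polyoIdeal K (rectCells a b \ P) ↔
      aeval (fun v => edgeMonomial K (ε v : Sym2 VG)) g = 0 := fun g => by rw [hker]; rfl
  set e : Fin 4 → Fin 4 → Sym2 VG := fun i j => ε ⟨_, hV i j⟩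
  have hcenter : RectRel e 1 2 1 2 := by
    refine rectRel_center_of_frame (fun i j => G.not_isDiag_of_mem_edgeSet (ε _).2) ?_ ?_
    · rintro ⟨i, j⟩ ⟨i', j'⟩ h
      have := congrArg Subtype.val (ε.injective (Subtype.val_injective h))
      simpa [(frameCoord_strictMono hx).injective.eq_iff,
        (frameCoord_strictMono hy).injective.eq_iff] using this
    · intro i i' j j' hi hj hij
      exact (aeval_edgeMonomial_binomial_eq_zero_iff _ _ _ _ _).1 ((mem_iff _).1
        (Ideal.subset_span ⟨_, _, hV i j, hV i' j', hV i j', hV i' j,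
          frame_isInnerInterval hinterior hx hy hi hj hij, rfl⟩))
  exact binomial_not_mem_polyoIdeal (hV 1 1) (hV 2 2) (hV 1 2) (hV 2 1)
    (frameCoord_strictMono hx (show (1 : Fin 4) < 2 by decide))
    (frameCoord_strictMono hy (show (1 : Fin 4) < 2 by decide))
    (frame_center_not_isInnerInterval hinterior hc)
    ((mem_iff _).2 ((aeval_edgeMonomial_binomial_eq_zero_iff _ _ _ _ _).2 hcenter))

theorem stmt5 (K : Type) [Field K] (a b : Cell) (hab1 : a.1 < b.1) (hab2 : a.2 < b.2)
    (P : Finset Cell) (hP : IsPolyomino P) (hsimple : IsSimple P)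
    (hsub : P ⊆ rectCells a b)
    (hinterior : ∀ c ∈ P, a.1 < c.1 ∧ c.1 + 1 < b.1 ∧ a.2 < c.2 ∧ c.2 + 1 < b.2) :
    ¬ ∃ (VG : Type) (_ : Fintype VG) (G : SimpleGraph VG)
        (ε : Vtx (rectCells a b \ P) ≃ G.edgeSet),
        polyoIdeal K (rectCells a b \ P) =
          RingHom.ker (MvPolynomial.aeval
            (fun v : Vtx (rectCells a b \ P) =>
              edgeMonomial K ((ε v : G.edgeSet) : Sym2 VG)) :
            polyRing K (rectCells a b \ P) →ₐ[K] MvPolynomial VG K).toRingHom :=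
  stmt5_general K a b P hP hinterior

end PolyoStmt
end

section
/- Let K be a field and let P be a polyomino admitting a zig-zag walk W: I₁,…,I_ℓ with vertices v_i, z_i, u_i as in the definition of zig-zag walk, and set f_W = Π_{k=1}^{ℓ} x_{z_k} − Π_{k=1}^{ℓ} x_{u_k} ∈ S_P. Then x_{v_i}·f_W ∈ I_P for every i = 1,…,ℓ, while f_W ∉ I_P and x_{v_i} ∉ I_P for every i; in particular, the residue classes of f_W and of each x_{v_i} are nonzero zero divisors in K[P]. -/
open MvPolynomial

/-!
Each interval `I_k` of the walk carries an inner 2-minor, which says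
`x_{v_k} x_{z_k} ≡ x_{u_k} x_{v_{k+1}}` modulo `I_P`. Running once around the cycle from `v_i`
moves `x_{v_i}` across `∏ x_{z_k}` and turns the product into `∏ x_{u_k}`, so
`x_{v_i} f_W ∈ I_P`.

The non-memberships are read off a single coefficient. If no monomial of an inner 2-minor
divides `x^m`, then `I_P` lies in the monomial ideal spanned by the monomials not dividing
`x^m`, so `x^m` has coefficient zero in every element of `I_P`. This applies to the variables
`x_{v_i}` (degree one) and to `∏ x_{z_k}` (no inner interval contains two of the `z_k`), while
`∏ x_{z_k}` has coefficient one in `f_W` because no `u_j` is a `z_k`.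
-/

theorem ZMod.prod_range_add_natCast {M : Type*} [CommMonoid M] {n : ℕ} [NeZero n]
    (f : ZMod n → M) (i : ZMod n) : ∏ t ∈ Finset.range n, f (i + t) = ∏ k, f k := by
  rw [← Equiv.prod_comp (Equiv.addLeft i) f]
  exact Finset.prod_nbij' (↑) ZMod.val (by simp) (by simp [ZMod.val_lt])
    (fun t ht => ZMod.val_cast_of_lt (Finset.mem_range.mp ht)) (by simp) (by simp)

/-- `∏ V` cannot be cancelled from `∏ V * ∏ Z = ∏ U * ∏ V` (think of zero divisors), so the
relations are chained once around the cycle instead, starting at `i`. -/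
theorem ZMod.mul_prod_eq_prod_mul_of_forall_mul_eq {M : Type*} [CommMonoid M] {n : ℕ}
    [NeZero n] {Z U V : ZMod n → M} (h : ∀ k, V k * Z k = U k * V (k + 1)) (i : ZMod n) :
    V i * ∏ k, Z k = (∏ k, U k) * V i := by
  have partial_prod : ∀ s : ℕ, V i * ∏ t ∈ Finset.range s, Z (i + t) =
      (∏ t ∈ Finset.range s, U (i + t)) * V (i + s) := by
    intro s
    induction s with
    | zero => simp
    | succ s ih =>
      rw [Finset.prod_range_succ, Finset.prod_range_succ, ← mul_assoc, ih, mul_assoc, h,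
        Nat.cast_succ, add_assoc, mul_assoc]
  simpa [ZMod.prod_range_add_natCast] using partial_prod n

namespace MvPolynomial

theorem coeff_eq_zero_of_mem_span_s7 {σ R : Type*} [CommSemiring R] {S : Set (MvPolynomial σ R)}
    {m : σ →₀ ℕ} (hS : ∀ g ∈ S, ∀ d ∈ g.support, ¬ d ≤ m) {f : MvPolynomial σ R}
    (hf : f ∈ Ideal.span S) : coeff m f = 0 := by
  have hle : Ideal.span S ≤ Ideal.span ((fun d => monomial d (1 : R)) '' {d | ¬ d ≤ m}) :=
    Ideal.span_le.mpr fun g hg => mem_ideal_span_monomial_image.mpr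
      fun d hd => ⟨d, hS g hg d hd, le_rfl⟩
  by_contra hm
  obtain ⟨d, hdm, hd⟩ := mem_ideal_span_monomial_image.mp (hle hf) m (mem_support_iff.mpr hm)
  exact hdm hd

theorem X_mul_X_eq_monomial_s7 {σ R : Type*} [CommSemiring R] (a b : σ) :
    (X a * X b : MvPolynomial σ R) = monomial (Finsupp.single a 1 + Finsupp.single b 1) 1 := by
  rw [X, X, monomial_mul, one_mul]

theorem X_mul_X_eq_of_pair_eq {σ R : Type*} [CommSemiring R] {p q r s : σ}
    (h : ({p, q} : Set σ) = {r, s}) : (X p * X q : MvPolynomial σ R) = X r * X s := by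
  rcases Set.pair_eq_pair_iff.mp h with ⟨rfl, rfl⟩ | ⟨rfl, rfl⟩
  · rfl
  · exact mul_comm _ _

theorem prod_X_eq_monomial {ι σ R : Type*} [CommSemiring R] (s : Finset ι) (f : ι → σ) :
    ∏ k ∈ s, (X (f k) : MvPolynomial σ R) =
      monomial (∑ k ∈ s, Finsupp.single (f k) 1) 1 := by
  rw [monomial_sum_one]
  rfl

theorem eq_or_eq_of_mem_support_X_mul_X_sub_X_mul_X {σ R : Type*} [CommRing R] {a b c d : σ}
    {e : σ →₀ ℕ} (he : e ∈ (X a * X b - X c * X d : MvPolynomial σ R).support) :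
    e = Finsupp.single a 1 + Finsupp.single b 1 ∨
      e = Finsupp.single c 1 + Finsupp.single d 1 := by
  classical
  rw [X_mul_X_eq_monomial_s7, X_mul_X_eq_monomial_s7] at he
  rcases Finset.mem_union.mp (support_sub _ _ _ he) with h | h <;>
    simp only [Finset.mem_singleton.mp (support_monomial_subset h), true_or, or_true]

end MvPolynomial

namespace Finsupp

theorem exists_eq_of_single_le_sum_single {ι σ : Type*} {s : Finset ι} {f : ι → σ} {p : σ}
    (h : single p 1 ≤ ∑ k ∈ s, single (f k) 1) : ∃ k ∈ s, f k = p := by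
  classical
  have hp := single_le_iff.mp h
  rw [finsetSum_apply] at hp
  obtain ⟨k, hk, hne⟩ := Finset.exists_ne_zero_of_sum_ne_zero (Nat.one_le_iff_ne_zero.mp hp)
  exact ⟨k, hk, by_contra fun hkp => hne (single_eq_of_ne (Ne.symm hkp))⟩

theorem not_single_add_single_le_single {σ : Type*} {p q r : σ} (hpq : p ≠ q) :
    ¬ single p 1 + single q 1 ≤ single r (1 : ℕ) := by
  intro h
  have hp : single p 1 ≤ single r 1 := le_trans le_self_add h
  have hq : single q 1 ≤ single r 1 := le_trans le_add_self h
  rw [single_le_iff, Nat.one_le_iff_ne_zero, single_apply_ne_zero] at hp hq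
  exact hpq (hp.1.trans hq.1.symm)

end Finsupp

namespace PolyoStmt

variable {K : Type} [Field K] {P : Finset Cell}

def InCommonInnerInterval (P : Finset Cell) (p q : ℤ × ℤ) : Prop :=
  ∃ a b, IsInnerInterval P a b ∧ p ∈ Set.Icc a b ∧ q ∈ Set.Icc a b

namespace IsInnerInterval

variable {a b : ℤ × ℤ} (hab : IsInnerInterval P a b)
include hab

theorem mem_Icc_of_mem_diag {x : ℤ × ℤ} (hx : x ∈ ({a, b} : Set (ℤ × ℤ))) :
    x ∈ Set.Icc a b := by
  obtain ⟨h1, h2, -⟩ := hab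
  rcases hx with rfl | rfl
  · exact ⟨le_rfl, h1.le, h2.le⟩
  · exact ⟨⟨h1.le, h2.le⟩, le_rfl⟩

theorem mem_Icc_of_mem_antidiag {x : ℤ × ℤ}
    (hx : x ∈ ({(a.1, b.2), (b.1, a.2)} : Set (ℤ × ℤ))) : x ∈ Set.Icc a b := by
  obtain ⟨h1, h2, -⟩ := hab
  rcases hx with rfl | rfl
  · exact ⟨⟨le_rfl, h2.le⟩, h1.le, le_rfl⟩
  · exact ⟨⟨h1.le, le_rfl⟩, le_rfl, h2.le⟩

theorem ne_of_mem_diag_of_mem_antidiag {x y : ℤ × ℤ} (hx : x ∈ ({a, b} : Set (ℤ × ℤ)))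
    (hy : y ∈ ({(a.1, b.2), (b.1, a.2)} : Set (ℤ × ℤ))) : x ≠ y := by
  obtain ⟨h1, h2, -⟩ := hab
  rcases hx with rfl | rfl <;> rcases hy with rfl | rfl <;>
    simp only [ne_eq, Prod.ext_iff] <;> omega

theorem mk_X_mul_X_eq_mk_X_mul_X (ha : a ∈ vertexSet P) (hb : b ∈ vertexSet P)
    (hc : (a.1, b.2) ∈ vertexSet P) (hd : (b.1, a.2) ∈ vertexSet P) :
    Ideal.Quotient.mk (polyoIdeal K P) (X ⟨a, ha⟩ * X ⟨b, hb⟩) =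
      Ideal.Quotient.mk (polyoIdeal K P) (X ⟨(a.1, b.2), hc⟩ * X ⟨(b.1, a.2), hd⟩) :=
  Ideal.Quotient.eq.mpr (Ideal.subset_span ⟨a, b, ha, hb, hc, hd, hab, rfl⟩)

theorem mk_X_mul_X_eq_of_pair_eq {p q r s : Vtx P}
    (hpq : ({p.1, q.1} : Set (ℤ × ℤ)) = {a, b})
    (hrs : ({r.1, s.1} : Set (ℤ × ℤ)) = {(a.1, b.2), (b.1, a.2)}) :
    Ideal.Quotient.mk (polyoIdeal K P) (X p * X q) =
      Ideal.Quotient.mk (polyoIdeal K P) (X r * X s) := by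
  have lift : ∀ {p q r s : Vtx P}, ({p.1, q.1} : Set (ℤ × ℤ)) = {r.1, s.1} →
      ({p, q} : Set (Vtx P)) = {r, s} := fun h =>
    Subtype.val_injective.image_injective (by simpa only [Set.image_pair] using h)
  obtain ⟨ha, hb⟩ := Set.pair_subset_iff.mp (hpq ▸ Set.pair_subset p.2 q.2)
  obtain ⟨hc, hd⟩ := Set.pair_subset_iff.mp (hrs ▸ Set.pair_subset r.2 s.2)
  rw [X_mul_X_eq_of_pair_eq (lift (r := ⟨a, ha⟩) (s := ⟨b, hb⟩) hpq),
    X_mul_X_eq_of_pair_eq (lift (r := ⟨(a.1, b.2), hc⟩) (s := ⟨(b.1, a.2), hd⟩) hrs)]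
  exact hab.mk_X_mul_X_eq_mk_X_mul_X ha hb hc hd

end IsInnerInterval

theorem coeff_eq_zero_of_mem_polyoIdeal {m : Vtx P →₀ ℕ}
    (hm : ∀ p q : Vtx P, p ≠ q → InCommonInnerInterval P p.1 q.1 →
      ¬ Finsupp.single p 1 + Finsupp.single q 1 ≤ m)
    {f : polyRing K P} (hf : f ∈ polyoIdeal K P) : coeff m f = 0 := by
  refine coeff_eq_zero_of_mem_span_s7 ?_ hf
  rintro g ⟨a, b, ha, hb, hc, hd, hab, rfl⟩ e he
  have hne : ∀ {x y : ℤ × ℤ}, x.1 < y.1 →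
      ∀ hx hy, (⟨x, hx⟩ : Vtx P) ≠ ⟨y, hy⟩ :=
    fun hxy _ _ h => hxy.ne (congrArg (·.1.1) h)
  rcases eq_or_eq_of_mem_support_X_mul_X_sub_X_mul_X he with rfl | rfl
  · exact hm _ _ (hne hab.1 ha hb)
      ⟨a, b, hab, hab.mem_Icc_of_mem_diag (by simp), hab.mem_Icc_of_mem_diag (by simp)⟩
  · exact hm _ _ (hne (x := (a.1, b.2)) (y := (b.1, a.2)) hab.1 hc hd)
      ⟨a, b, hab, hab.mem_Icc_of_mem_antidiag (by simp),
        hab.mem_Icc_of_mem_antidiag (by simp)⟩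

theorem X_notMem_polyoIdeal (p : Vtx P) : (X p : polyRing K P) ∉ polyoIdeal K P := by
  intro hp
  simpa using coeff_eq_zero_of_mem_polyoIdeal (m := Finsupp.single p 1)
    (fun _ _ hqr _ => Finsupp.not_single_add_single_le_single hqr) hp

namespace ZigZagWalk

variable (W : ZigZagWalk P)

theorem z_mem_Icc (i : ZMod (W.n + 2)) : W.z i ∈ Set.Icc (W.lo i) (W.hi i) := by
  have hz : W.z i ∈ ({W.v i, W.z i} : Set (ℤ × ℤ)) := by simp
  rcases W.corners i with ⟨h, -⟩ | ⟨h, -⟩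
  · exact (W.inner i).mem_Icc_of_mem_diag (h ▸ hz)
  · exact (W.inner i).mem_Icc_of_mem_antidiag (h ▸ hz)

theorem u_mem_Icc (i : ZMod (W.n + 2)) : W.u i ∈ Set.Icc (W.lo i) (W.hi i) := by
  have hu : W.u i ∈ ({W.u i, W.v (i + 1)} : Set (ℤ × ℤ)) := by simp
  rcases W.corners i with ⟨-, h⟩ | ⟨-, h⟩
  · exact (W.inner i).mem_Icc_of_mem_antidiag (h ▸ hu)
  · exact (W.inner i).mem_Icc_of_mem_diag (h ▸ hu)

theorem u_ne_z (i j : ZMod (W.n + 2)) : W.u i ≠ W.z j := by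
  intro h
  by_cases hij : i = j
  · subst hij
    have hz : W.z i ∈ ({W.v i, W.z i} : Set (ℤ × ℤ)) := by simp
    have hu : W.u i ∈ ({W.u i, W.v (i + 1)} : Set (ℤ × ℤ)) := by simp
    rcases W.corners i with ⟨hvz, huv⟩ | ⟨hvz, huv⟩
    · exact (W.inner i).ne_of_mem_diag_of_mem_antidiag (hvz ▸ hz) (huv ▸ hu) h.symm
    · exact (W.inner i).ne_of_mem_diag_of_mem_antidiag (huv ▸ hu) (hvz ▸ hz) h
  · exact W.noCommon i j hij _ _ (W.inner i) ⟨W.z_mem_Icc i, h ▸ W.u_mem_Icc i⟩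

theorem mk_X_v_mul_mk_X_z (i : ZMod (W.n + 2)) :
    Ideal.Quotient.mk (polyoIdeal K P) (X ⟨W.v i, W.hv i⟩) *
        Ideal.Quotient.mk (polyoIdeal K P) (X ⟨W.z i, W.hz i⟩) =
      Ideal.Quotient.mk (polyoIdeal K P) (X ⟨W.u i, W.hu i⟩) *
        Ideal.Quotient.mk (polyoIdeal K P) (X ⟨W.v (i + 1), W.hv (i + 1)⟩) := by
  simp only [← map_mul]
  rcases W.corners i with ⟨hvz, huv⟩ | ⟨hvz, huv⟩
  · exact (W.inner i).mk_X_mul_X_eq_of_pair_eq hvz huv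
  · exact ((W.inner i).mk_X_mul_X_eq_of_pair_eq huv hvz).symm

theorem X_v_mul_zigZagBinomial_mem (i : ZMod (W.n + 2)) :
    X ⟨W.v i, W.hv i⟩ * zigZagBinomial K W ∈ polyoIdeal K P := by
  rw [← Ideal.Quotient.eq_zero_iff_mem, map_mul, zigZagBinomial, map_sub, map_prod, map_prod,
    mul_sub, ZMod.mul_prod_eq_prod_mul_of_forall_mul_eq W.mk_X_v_mul_mk_X_z i, mul_comm,
    sub_self]

theorem not_single_add_single_le_sum_single_z {p q : Vtx P} (hpq : p ≠ q)
    (hcommon : InCommonInnerInterval P p.1 q.1) :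
    ¬ Finsupp.single p 1 + Finsupp.single q 1 ≤ ∑ k, Finsupp.single ⟨W.z k, W.hz k⟩ 1 := by
  intro hle
  obtain ⟨k, -, rfl⟩ := Finsupp.exists_eq_of_single_le_sum_single (le_trans le_self_add hle)
  obtain ⟨l, -, rfl⟩ := Finsupp.exists_eq_of_single_le_sum_single (le_trans le_add_self hle)
  obtain ⟨a, b, hab, hk, hl⟩ := hcommon
  exact W.noCommon k l (by rintro rfl; exact hpq rfl) a b hab ⟨hk, hl⟩

theorem zigZagBinomial_notMem : zigZagBinomial K W ∉ polyoIdeal K P := by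
  set ez : Vtx P →₀ ℕ := ∑ k, Finsupp.single ⟨W.z k, W.hz k⟩ 1
  set eu : Vtx P →₀ ℕ := ∑ k, Finsupp.single ⟨W.u k, W.hu k⟩ 1
  have heu : eu ≠ ez := by
    intro h
    have hz0 : Finsupp.single ⟨W.z 0, W.hz 0⟩ 1 ≤ eu :=
      h ▸ Finset.single_le_sum (f := fun k => Finsupp.single (⟨W.z k, W.hz k⟩ : Vtx P) 1)
        (fun _ _ => zero_le) (Finset.mem_univ 0)
    obtain ⟨k, -, hk⟩ := Finsupp.exists_eq_of_single_le_sum_single hz0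
    exact W.u_ne_z k 0 (congrArg Subtype.val hk)
  have hcoeff : coeff ez (zigZagBinomial K W) = 1 := by
    rw [zigZagBinomial, prod_X_eq_monomial, prod_X_eq_monomial, coeff_sub, coeff_monomial,
      coeff_monomial, if_pos rfl, if_neg heu, sub_zero]
  intro hmem
  exact one_ne_zero (hcoeff.symm.trans (coeff_eq_zero_of_mem_polyoIdeal
    (fun _ _ hpq hcommon => W.not_single_add_single_le_sum_single_z hpq hcommon) hmem))

end ZigZagWalk

theorem stmt7_general (K : Type) [Field K] (P : Finset Cell)
    (W : ZigZagWalk P) :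
    (∀ i : ZMod (W.n + 2),
      X ⟨W.v i, W.hv i⟩ * zigZagBinomial K W ∈ polyoIdeal K P) ∧
    zigZagBinomial K W ∉ polyoIdeal K P ∧
    (∀ i : ZMod (W.n + 2),
      (X ⟨W.v i, W.hv i⟩ : polyRing K P) ∉ polyoIdeal K P) ∧
    (Ideal.Quotient.mk (polyoIdeal K P) (zigZagBinomial K W) ≠ 0 ∧
      Ideal.Quotient.mk (polyoIdeal K P) (zigZagBinomial K W) ∉
        nonZeroDivisors (coordRing K P)) ∧
    (∀ i : ZMod (W.n + 2),
      Ideal.Quotient.mk (polyoIdeal K P) (X ⟨W.v i, W.hv i⟩) ≠ 0 ∧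
        Ideal.Quotient.mk (polyoIdeal K P) (X ⟨W.v i, W.hv i⟩) ∉
          nonZeroDivisors (coordRing K P)) := by
  have hmul := W.X_v_mul_zigZagBinomial_mem (K := K)
  have hf := W.zigZagBinomial_notMem (K := K)
  have hx := fun i => X_notMem_polyoIdeal (K := K) ⟨W.v i, W.hv i⟩
  have hmk_mul : ∀ i, Ideal.Quotient.mk (polyoIdeal K P) (X ⟨W.v i, W.hv i⟩) *
      Ideal.Quotient.mk (polyoIdeal K P) (zigZagBinomial K W) = 0 := fun i => by
    rw [← map_mul, Ideal.Quotient.eq_zero_iff_mem]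
    exact hmul i
  have hmk_f : Ideal.Quotient.mk (polyoIdeal K P) (zigZagBinomial K W) ≠ 0 :=
    mt Ideal.Quotient.eq_zero_iff_mem.mp hf
  have hmk_x : ∀ i, Ideal.Quotient.mk (polyoIdeal K P) (X ⟨W.v i, W.hv i⟩) ≠ 0 :=
    fun i => mt Ideal.Quotient.eq_zero_iff_mem.mp (hx i)
  refine ⟨hmul, hf, hx, ⟨hmk_f, ?_⟩, fun i => ⟨hmk_x i, ?_⟩⟩
  · exact notMem_nonZeroDivisors_iff_right.mpr ⟨_, hmk_mul 0, hmk_x 0⟩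
  · exact notMem_nonZeroDivisors_iff_left.mpr ⟨_, hmk_mul i, hmk_f⟩

theorem stmt7 (K : Type) [Field K] (P : Finset Cell) (hP : IsPolyomino P)
    (W : ZigZagWalk P) :
    (∀ i : ZMod (W.n + 2),
      X ⟨W.v i, W.hv i⟩ * zigZagBinomial K W ∈ polyoIdeal K P) ∧
    zigZagBinomial K W ∉ polyoIdeal K P ∧
    (∀ i : ZMod (W.n + 2),
      (X ⟨W.v i, W.hv i⟩ : polyRing K P) ∉ polyoIdeal K P) ∧
    (Ideal.Quotient.mk (polyoIdeal K P) (zigZagBinomial K W) ≠ 0 ∧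
      Ideal.Quotient.mk (polyoIdeal K P) (zigZagBinomial K W) ∉
        nonZeroDivisors (coordRing K P)) ∧
    (∀ i : ZMod (W.n + 2),
      Ideal.Quotient.mk (polyoIdeal K P) (X ⟨W.v i, W.hv i⟩) ≠ 0 ∧
        Ideal.Quotient.mk (polyoIdeal K P) (X ⟨W.v i, W.hv i⟩) ∉
          nonZeroDivisors (coordRing K P)) :=
  stmt7_general K P W

end PolyoStmt
end
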